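/- Let L ∈ ℝ^{d×p} be such that LLᵀ is invertible, let q ∈ ℝᵈ, v ∈ ℝᵖ, and β ∈ ℝ. Let K = [L q] ∈ ℝ^{d×(p+1)} be L with the column q appended and let u = (v, β) ∈ ℝ^{p+1} be v with β appended, so that KKᵀ = LLᵀ + qqᵀ is invertible. Set α = qᵀ(KKᵀ)⁻¹q and γ = qᵀ(KKᵀ)⁻¹(Lv + βq). Then α < 1 and ‖R_K u‖² − ‖R_L v‖² = (β − γ)² / (1 − α); i.e., removing the column q from K increases the residual of u by exactly (β − γ)²/(1 − α). -/

import Mathlib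

open Matrix

noncomputable section

/-- The matrix `L` with the vector `q` appended as a last column. -/
def appendCol {d p : ℕ} (L : Matrix (Fin d) (Fin p) ℝ) (q : Fin d → ℝ) :
    Matrix (Fin d) (Fin (p + 1)) ℝ :=
  Matrix.of fun i => Fin.snoc (L i) (q i)

/-- `P_L = Lᵀ (L Lᵀ)⁻¹ L`, the orthogonal projection of `ℝᵖ` onto the row space of `L`. -/
def projRow {d p : ℕ} (L : Matrix (Fin d) (Fin p) ℝ) : Matrix (Fin p) (Fin p) ℝ :=
  Lᵀ * (L * Lᵀ)⁻¹ * L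

/-- `R_L = I − P_L`. -/
def residRow {d p : ℕ} (L : Matrix (Fin d) (Fin p) ℝ) : Matrix (Fin p) (Fin p) ℝ :=
  1 - projRow L


/-!
For any `M` with `M Mᵀ` invertible, `‖R_M x‖² = ‖x‖² - (M x)ᵀ (M Mᵀ)⁻¹ (M x)`. Here
`K Kᵀ = A + q qᵀ` with `A = L Lᵀ` and `K u = L v + β q`, so the Sherman–Morrison formula rewrites
every quadratic form in `(K Kᵀ)⁻¹` through `A⁻¹`. With `s = qᵀ A⁻¹ q ≥ 0` and `t = qᵀ A⁻¹ L v`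
this gives `α = s / (1 + s)`, `γ = (t + β s) / (1 + s)` and a residual gap of
`(β - t)² / (1 + s)`, which is `(β - γ)² / (1 - α)`.
-/

namespace Matrix

section ShermanMorrison

variable {n 𝕜 : Type*} [Fintype n] [DecidableEq n] [Field 𝕜]

theorem inv_add_vecMulVec {A : Matrix n n 𝕜} (hA : IsUnit A) (a b : n → 𝕜)
    (hs : 1 + b ⬝ᵥ (A⁻¹ *ᵥ a) ≠ 0) :
    (A + vecMulVec a b)⁻¹ =
      A⁻¹ - (1 + b ⬝ᵥ (A⁻¹ *ᵥ a))⁻¹ • vecMulVec (A⁻¹ *ᵥ a) (b ᵥ* A⁻¹) := by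
  have hAdet := (isUnit_iff_isUnit_det A).mp hA
  apply inv_eq_right_inv
  rw [add_mul, mul_sub, mul_sub, Matrix.mul_smul, Matrix.mul_smul, mul_vecMulVec, mul_vecMulVec,
    mulVec_mulVec, mul_nonsing_inv A hAdet, one_mulVec, vecMulVec_mulVec, op_smul_eq_smul,
    smul_vecMulVec, vecMulVec_mul, smul_smul]
  have hc : (1 + b ⬝ᵥ (A⁻¹ *ᵥ a))⁻¹ * (1 + b ⬝ᵥ (A⁻¹ *ᵥ a)) = 1 := inv_mul_cancel₀ hs
  linear_combination (norm := module) -(hc • vecMulVec a (b ᵥ* A⁻¹))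

theorem dotProduct_inv_add_vecMulVec_mulVec {A : Matrix n n 𝕜} (hA : IsUnit A)
    (a b x y : n → 𝕜) (hs : 1 + b ⬝ᵥ (A⁻¹ *ᵥ a) ≠ 0) :
    x ⬝ᵥ ((A + vecMulVec a b)⁻¹ *ᵥ y) =
      x ⬝ᵥ (A⁻¹ *ᵥ y) - (x ⬝ᵥ (A⁻¹ *ᵥ a)) * (b ⬝ᵥ (A⁻¹ *ᵥ y)) / (1 + b ⬝ᵥ (A⁻¹ *ᵥ a)) := by
  rw [inv_add_vecMulVec hA a b hs, sub_mulVec, smul_mulVec, vecMulVec_mulVec, op_smul_eq_smul,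
    ← dotProduct_mulVec, dotProduct_sub, dotProduct_smul, dotProduct_smul, smul_eq_mul,
    smul_eq_mul]
  ring

theorem dotProduct_inv_add_vecMulVec_mulVec_left {A : Matrix n n 𝕜} (hA : IsUnit A)
    (a b y : n → 𝕜) (hs : 1 + b ⬝ᵥ (A⁻¹ *ᵥ a) ≠ 0) :
    b ⬝ᵥ ((A + vecMulVec a b)⁻¹ *ᵥ y) = b ⬝ᵥ (A⁻¹ *ᵥ y) / (1 + b ⬝ᵥ (A⁻¹ *ᵥ a)) := by
  rw [dotProduct_inv_add_vecMulVec_mulVec hA a b b y hs]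
  field_simp
  ring

end ShermanMorrison

theorem IsSymm.dotProduct_mulVec_comm {n α : Type*} [Fintype n] [CommSemiring α]
    {A : Matrix n n α} (hA : A.IsSymm) (x y : n → α) :
    x ⬝ᵥ (A *ᵥ y) = y ⬝ᵥ (A *ᵥ x) := by
  rw [dotProduct_mulVec, ← mulVec_transpose, hA.eq, dotProduct_comm]

theorem snoc_dotProduct_snoc {n : ℕ} {α : Type*} [AddCommMonoid α] [Mul α]
    (v w : Fin n → α) (a b : α) :
    Fin.snoc (α := fun _ => α) v a ⬝ᵥ Fin.snoc (α := fun _ => α) w b = v ⬝ᵥ w + a * b := by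
  simp [dotProduct, Fin.sum_univ_castSucc]

theorem posDef_mul_transpose_self_of_isUnit {m n : Type*} [Fintype m] [Fintype n] [DecidableEq m]
    {L : Matrix m n ℝ} (hL : IsUnit (L * Lᵀ)) : (L * Lᵀ).PosDef := by
  have h := posSemidef_self_mul_conjTranspose L
  rw [conjTranspose_eq_transpose_of_trivial] at h
  exact h.posDef_iff_isUnit.mpr hL

end Matrix

open Matrix

theorem appendCol_mul_transpose {d p : ℕ} (L : Matrix (Fin d) (Fin p) ℝ) (q : Fin d → ℝ) :
    appendCol L q * (appendCol L q)ᵀ = L * Lᵀ + vecMulVec q q := by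
  ext i j
  simp [mul_apply, appendCol, Fin.sum_univ_castSucc, vecMulVec_apply]

theorem appendCol_mulVec_snoc {d p : ℕ} (L : Matrix (Fin d) (Fin p) ℝ) (q : Fin d → ℝ)
    (v : Fin p → ℝ) (β : ℝ) :
    appendCol L q *ᵥ Fin.snoc v β = L *ᵥ v + β • q := by
  ext i
  simp [mulVec, dotProduct, appendCol, Fin.sum_univ_castSucc, mul_comm]

theorem residRow_mulVec_dotProduct_self {d p : ℕ} (M : Matrix (Fin d) (Fin p) ℝ)
    (hM : IsUnit (M * Mᵀ)) (x : Fin p → ℝ) :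
    (residRow M *ᵥ x) ⬝ᵥ (residRow M *ᵥ x) =
      x ⬝ᵥ x - (M *ᵥ x) ⬝ᵥ ((M * Mᵀ)⁻¹ *ᵥ (M *ᵥ x)) := by
  set c := (M * Mᵀ)⁻¹ *ᵥ (M *ᵥ x) with hc
  have hres : residRow M *ᵥ x = x - Mᵀ *ᵥ c := by
    simp only [residRow, projRow, sub_mulVec, one_mulVec, mulVec_mulVec, c, Matrix.mul_assoc]
  have hcross : x ⬝ᵥ (Mᵀ *ᵥ c) = (M *ᵥ x) ⬝ᵥ c := by
    rw [dotProduct_mulVec, vecMul_transpose]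
  have hsq : (Mᵀ *ᵥ c) ⬝ᵥ (Mᵀ *ᵥ c) = (M *ᵥ x) ⬝ᵥ c := by
    rw [dotProduct_mulVec, vecMul_transpose, mulVec_mulVec, hc, mulVec_mulVec,
      mul_nonsing_inv _ ((isUnit_iff_isUnit_det _).mp hM), one_mulVec, dotProduct_comm]
  rw [hres, sub_dotProduct, dotProduct_sub, dotProduct_sub, hcross, hsq,
    dotProduct_comm (Mᵀ *ᵥ c) x, hcross]
  ring

theorem isUnit_appendCol_mul_transpose {d p : ℕ} {L : Matrix (Fin d) (Fin p) ℝ}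
    (hL : IsUnit (L * Lᵀ)) (q : Fin d → ℝ) : IsUnit (appendCol L q * (appendCol L q)ᵀ) := by
  rw [appendCol_mul_transpose]
  exact ((posDef_mul_transpose_self_of_isUnit hL).add_posSemidef
    (posSemidef_vecMulVec_self_star q)).isUnit

theorem dotProduct_inv_mul_transpose_mulVec_self_nonneg {d p : ℕ} {L : Matrix (Fin d) (Fin p) ℝ}
    (hL : IsUnit (L * Lᵀ)) (q : Fin d → ℝ) : 0 ≤ q ⬝ᵥ ((L * Lᵀ)⁻¹ *ᵥ q) :=
  (posDef_mul_transpose_self_of_isUnit hL).inv.posSemidef.dotProduct_mulVec_nonneg q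

theorem residRow_appendCol_sub {d p : ℕ} {L : Matrix (Fin d) (Fin p) ℝ} (hL : IsUnit (L * Lᵀ))
    (q : Fin d → ℝ) (v : Fin p → ℝ) (β : ℝ) :
    (residRow (appendCol L q) *ᵥ Fin.snoc v β) ⬝ᵥ (residRow (appendCol L q) *ᵥ Fin.snoc v β) -
        (residRow L *ᵥ v) ⬝ᵥ (residRow L *ᵥ v) =
      (β - q ⬝ᵥ ((L * Lᵀ)⁻¹ *ᵥ (L *ᵥ v))) ^ 2 / (1 + q ⬝ᵥ ((L * Lᵀ)⁻¹ *ᵥ q)) := by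
  have hs : 0 < 1 + q ⬝ᵥ ((L * Lᵀ)⁻¹ *ᵥ q) := by
    linarith [dotProduct_inv_mul_transpose_mulVec_self_nonneg hL q]
  have hsymm : (L * Lᵀ)⁻¹.IsSymm := by
    refine IsSymm.inv ?_
    rw [IsSymm, transpose_mul, transpose_transpose]
  rw [residRow_mulVec_dotProduct_self _ (isUnit_appendCol_mul_transpose hL q),
    residRow_mulVec_dotProduct_self _ hL, appendCol_mulVec_snoc, snoc_dotProduct_snoc,
    appendCol_mul_transpose, dotProduct_inv_add_vecMulVec_mulVec hL q q _ _ hs.ne',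
    hsymm.dotProduct_mulVec_comm q (L *ᵥ v + β • q)]
  set w := L *ᵥ v
  set s := q ⬝ᵥ ((L * Lᵀ)⁻¹ *ᵥ q)
  set t := q ⬝ᵥ ((L * Lᵀ)⁻¹ *ᵥ w)
  have hcross : (w + β • q) ⬝ᵥ ((L * Lᵀ)⁻¹ *ᵥ q) = t + β * s := by
    rw [add_dotProduct, smul_dotProduct, hsymm.dotProduct_mulVec_comm, smul_eq_mul]
  have hquad : (w + β • q) ⬝ᵥ ((L * Lᵀ)⁻¹ *ᵥ (w + β • q)) =
      w ⬝ᵥ ((L * Lᵀ)⁻¹ *ᵥ w) + 2 * β * t + β ^ 2 * s := by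
    rw [mulVec_add, mulVec_smul, dotProduct_add, dotProduct_smul, hcross, add_dotProduct,
      smul_dotProduct, smul_eq_mul, smul_eq_mul]
    ring
  rw [hquad, hcross]
  field_simp
  ring

theorem stmt19 {d p : ℕ} (L : Matrix (Fin d) (Fin p) ℝ)
    (hL : IsUnit (L * Lᵀ))
    (q : Fin d → ℝ) (v : Fin p → ℝ) (β : ℝ)
    (K : Matrix (Fin d) (Fin (p + 1)) ℝ) (hK : K = appendCol L q)
    (u : Fin (p + 1) → ℝ) (hu : u = Fin.snoc v β)
    (α γ : ℝ) (hα : α = q ⬝ᵥ ((K * Kᵀ)⁻¹ *ᵥ q))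
    (hγ : γ = q ⬝ᵥ ((K * Kᵀ)⁻¹ *ᵥ (L *ᵥ v + β • q))) :
    K * Kᵀ = L * Lᵀ + vecMulVec q q ∧
      IsUnit (K * Kᵀ) ∧
      α < 1 ∧
      (residRow K *ᵥ u) ⬝ᵥ (residRow K *ᵥ u) -
          (residRow L *ᵥ v) ⬝ᵥ (residRow L *ᵥ v) =
        (β - γ) ^ 2 / (1 - α) := by
  subst hK hu
  have hs : 0 < 1 + q ⬝ᵥ ((L * Lᵀ)⁻¹ *ᵥ q) := by
    linarith [dotProduct_inv_mul_transpose_mulVec_self_nonneg hL q]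
  rw [appendCol_mul_transpose, dotProduct_inv_add_vecMulVec_mulVec_left hL q q _ hs.ne'] at hα hγ
  rw [mulVec_add, mulVec_smul, dotProduct_add, dotProduct_smul, smul_eq_mul] at hγ
  refine ⟨appendCol_mul_transpose L q, isUnit_appendCol_mul_transpose hL q, ?_, ?_⟩
  · rw [hα, div_lt_one hs]
    linarith
  · rw [residRow_appendCol_sub hL, hα, hγ]
    field_simp
    ring

end
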